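/- arXiv:1405.4656 — 5 statements merged into one kernel-verified Lean document; each statement's English description precedes it below -/
import Mathlib

section
/- For every p ∈ ℝ³, the matrix U(p) = a₊(p)I₄ + a₋(p)β(α·p)/|p| is unitary, with inverse U(p)⁻¹ = a₊(p)I₄ − a₋(p)β(α·p)/|p|. -/
noncomputable section
open MeasureTheory Filter Set Matrix
open scoped Real ENNReal RealInnerProductSpace FourierTransform

abbrev R3 : Type := EuclideanSpace ℝ (Fin 3)
abbrev C4 : Type := EuclideanSpace ℂ (Fin 4)
abbrev C2 : Type := EuclideanSpace ℂ (Fin 2)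

/-- `λ(p) = √(c²|p|² + m²c⁴)` -/
def lam (m c : ℝ) (p : R3) : ℝ := Real.sqrt (c ^ 2 * ‖p‖ ^ 2 + m ^ 2 * c ^ 4)

/-- `a₊(p) = √((1 + mc²/λ(p))/2)` -/
def aplus (m c : ℝ) (p : R3) : ℝ := Real.sqrt ((1 + m * c ^ 2 / lam m c p) / 2)

/-- `a₋(p) = √((1 − mc²/λ(p))/2)` -/
def aminus (m c : ℝ) (p : R3) : ℝ := Real.sqrt ((1 - m * c ^ 2 / lam m c p) / 2)

/-- The Pauli matrices σ₁, σ₂, σ₃. -/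
def pauli : Fin 3 → Matrix (Fin 2) (Fin 2) ℂ
  | 0 => !![0, 1; 1, 0]
  | 1 => !![0, -Complex.I; Complex.I, 0]
  | 2 => !![1, 0; 0, -1]

/-- Assemble a 4×4 matrix from 2×2 blocks. -/
def block4 (A B C D : Matrix (Fin 2) (Fin 2) ℂ) : Matrix (Fin 4) (Fin 4) ℂ :=
  Matrix.reindex finSumFinEquiv finSumFinEquiv (Matrix.fromBlocks A B C D)

/-- The Dirac matrix β = diag(I₂, −I₂). -/
def diracBeta : Matrix (Fin 4) (Fin 4) ℂ := block4 1 0 0 (-1)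

/-- The Dirac matrices αₖ with σₖ in the off-diagonal blocks. -/
def diracAlpha (k : Fin 3) : Matrix (Fin 4) (Fin 4) ℂ :=
  block4 0 (pauli k) (pauli k) 0

/-- `α·p = α₁p₁ + α₂p₂ + α₃p₃`. -/
def alphaDot (p : R3) : Matrix (Fin 4) (Fin 4) ℂ := ∑ k : Fin 3, (p k : ℂ) • diracAlpha k

/-- `U(p) = a₊(p) I₄ + a₋(p) β (α·p)/|p|`. -/
def Umat (m c : ℝ) (p : R3) : Matrix (Fin 4) (Fin 4) ℂ :=
  (aplus m c p : ℂ) • 1 + ((aminus m c p / ‖p‖ : ℝ) : ℂ) • (diracBeta * alphaDot p)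

/-- `U(p)⁻¹ = a₊(p) I₄ − a₋(p) β (α·p)/|p|`. -/
def UmatInv (m c : ℝ) (p : R3) : Matrix (Fin 4) (Fin 4) ℂ :=
  (aplus m c p : ℂ) • 1 - ((aminus m c p / ‖p‖ : ℝ) : ℂ) • (diracBeta * alphaDot p)

-- auxiliary lemmas

lemma diracBeta_eq : diracBeta = !![1,0,0,0;0,1,0,0;0,0,-1,0;0,0,0,-1] := by
  ext i j
  fin_cases i <;> fin_cases j <;> first | rfl | (show -(0:ℂ) = 0; norm_num)

lemma diracAlpha0_eq : diracAlpha 0 = !![0,0,0,1;0,0,1,0;0,1,0,0;1,0,0,0] := by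
  ext i j
  fin_cases i <;> fin_cases j <;> rfl

lemma diracAlpha1_eq : diracAlpha 1 =
    !![0,0,0,-Complex.I;0,0,Complex.I,0;0,-Complex.I,0,0;Complex.I,0,0,0] := by
  ext i j
  fin_cases i <;> fin_cases j <;> rfl

lemma diracAlpha2_eq : diracAlpha 2 = !![0,0,1,0;0,0,0,-1;1,0,0,0;0,-1,0,0] := by
  ext i j
  fin_cases i <;> fin_cases j <;> rfl

set_option maxHeartbeats 1600000 in
lemma betaAlpha_eq (p : R3) : diracBeta * alphaDot p =
    !![0, 0, (p 2 : ℂ), (p 0 : ℂ) - Complex.I * (p 1 : ℂ);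
       0, 0, (p 0 : ℂ) + Complex.I * (p 1 : ℂ), -(p 2 : ℂ);
       -(p 2 : ℂ), -((p 0 : ℂ) - Complex.I * (p 1 : ℂ)), 0, 0;
       -((p 0 : ℂ) + Complex.I * (p 1 : ℂ)), (p 2 : ℂ), 0, 0] := by
  rw [alphaDot, Fin.sum_univ_three, diracBeta_eq, diracAlpha0_eq, diracAlpha1_eq,
    diracAlpha2_eq]
  ext i j
  fin_cases i <;> fin_cases j <;>
    simp [Matrix.mul_apply, Fin.sum_univ_succ, Matrix.vecHead, Matrix.vecTail] <;> ring

set_option maxHeartbeats 1600000 in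
lemma betaAlpha_sq (p : R3) : (diracBeta * alphaDot p) * (diracBeta * alphaDot p) =
    (-(((p 0)^2 + (p 1)^2 + (p 2)^2 : ℝ) : ℂ)) • 1 := by
  rw [betaAlpha_eq]
  ext i j
  fin_cases i <;> fin_cases j <;>
    simp [Matrix.mul_apply, Fin.sum_univ_succ, Matrix.one_apply, Matrix.vecHead,
      Matrix.vecTail] <;> push_cast <;> ring_nf <;>
    simp [Complex.I_sq] <;> try ring

set_option maxHeartbeats 1600000 in
lemma betaAlpha_conjTranspose (p : R3) :
    (diracBeta * alphaDot p)ᴴ = -(diracBeta * alphaDot p) := by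
  rw [betaAlpha_eq]
  ext i j
  fin_cases i <;> fin_cases j <;>
    simp [Matrix.conjTranspose_apply, Complex.star_def, map_sub, map_add,
      Complex.conj_ofReal, Complex.conj_I, Matrix.vecHead, Matrix.vecTail] <;> try ring

lemma aux_mul (a b t : ℂ) (M : Matrix (Fin 4) (Fin 4) ℂ) (h : M * M = t • 1) :
    (a • 1 + b • M) * (a • 1 - b • M) = (a ^ 2 - b ^ 2 * t) • (1 : Matrix (Fin 4) (Fin 4) ℂ) := by
  rw [add_mul, mul_sub, mul_sub, smul_mul_smul_comm, smul_mul_smul_comm,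
    smul_mul_smul_comm, smul_mul_smul_comm, h]
  simp only [one_mul, mul_one]
  module

lemma aux_mul' (a b t : ℂ) (M : Matrix (Fin 4) (Fin 4) ℂ) (h : M * M = t • 1) :
    (a • 1 - b • M) * (a • 1 + b • M) = (a ^ 2 - b ^ 2 * t) • (1 : Matrix (Fin 4) (Fin 4) ℂ) := by
  rw [sub_mul, mul_add, mul_add, smul_mul_smul_comm, smul_mul_smul_comm,
    smul_mul_smul_comm, smul_mul_smul_comm, h]
  simp only [one_mul, mul_one]
  module

/-- For every `p ∈ ℝ³`, `U(p)` is unitary with inverse `a₊(p)I₄ − a₋(p)β(α·p)/|p|`. -/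
theorem Umat_unitary (m c : ℝ) (hm : 0 < m) (hc : 0 < c) (p : R3) (hp : p ≠ 0) :
    Umat m c p ∈ Matrix.unitaryGroup (Fin 4) ℂ ∧ (Umat m c p)⁻¹ = UmatInv m c p := by
  have hpn : (0:ℝ) < ‖p‖ := norm_pos_iff.mpr hp
  have hlam : 0 < lam m c p := by
    apply Real.sqrt_pos.mpr
    positivity
  have hmc_le : m * c ^ 2 ≤ lam m c p := by
    rw [lam]
    calc m * c ^ 2 = Real.sqrt (m ^ 2 * c ^ 4) := by
          rw [show m ^ 2 * c ^ 4 = (m * c ^ 2) ^ 2 by ring, Real.sqrt_sq (by positivity)]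
      _ ≤ _ := Real.sqrt_le_sqrt (by nlinarith [sq_nonneg (c * ‖p‖)])
  have hx0 : 0 ≤ m * c ^ 2 / lam m c p := by positivity
  have hx1 : m * c ^ 2 / lam m c p ≤ 1 := (div_le_one hlam).mpr hmc_le
  have hap : (aplus m c p) ^ 2 = (1 + m * c ^ 2 / lam m c p) / 2 := by
    rw [aplus, Real.sq_sqrt (by linarith)]
  have ham : (aminus m c p) ^ 2 = (1 - m * c ^ 2 / lam m c p) / 2 := by
    rw [aminus, Real.sq_sqrt (by linarith)]
  have hsum : (aplus m c p) ^ 2 + (aminus m c p) ^ 2 = 1 := by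
    rw [hap, ham]; ring
  have hnorm : ‖p‖ ^ 2 = (p 0) ^ 2 + (p 1) ^ 2 + (p 2) ^ 2 := by
    rw [EuclideanSpace.norm_eq, Real.sq_sqrt (by positivity)]
    simp [Fin.sum_univ_three, Real.norm_eq_abs, sq_abs]
  -- coefficient identity
  have hb2 : (aminus m c p / ‖p‖) ^ 2 * ((p 0) ^ 2 + (p 1) ^ 2 + (p 2) ^ 2)
      = (aminus m c p) ^ 2 := by
    rw [← hnorm]; field_simp
  have hcoef : ((aplus m c p : ℂ)) ^ 2 -
      ((aminus m c p / ‖p‖ : ℝ) : ℂ) ^ 2 * (-(((p 0)^2 + (p 1)^2 + (p 2)^2 : ℝ) : ℂ)) = 1 := by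
    have : (aplus m c p) ^ 2 + (aminus m c p / ‖p‖) ^ 2 *
        ((p 0) ^ 2 + (p 1) ^ 2 + (p 2) ^ 2) = 1 := by rw [hb2]; exact hsum
    push_cast
    have := congrArg (fun x : ℝ => (x : ℂ)) this
    push_cast at this
    linear_combination this
  have hM := betaAlpha_sq p
  have h1 : Umat m c p * UmatInv m c p = 1 := by
    rw [Umat, UmatInv, aux_mul _ _ _ _ hM, hcoef, one_smul]
  have h2 : UmatInv m c p * Umat m c p = 1 := by
    rw [Umat, UmatInv, aux_mul' _ _ _ _ hM, hcoef, one_smul]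
  have hstar : star (Umat m c p) = UmatInv m c p := by
    show (Umat m c p)ᴴ = UmatInv m c p
    rw [Umat, UmatInv, conjTranspose_add, conjTranspose_smul, conjTranspose_smul,
      conjTranspose_one, betaAlpha_conjTranspose]
    simp [Complex.star_def, Complex.conj_ofReal, sub_eq_add_neg]
  constructor
  · rw [Matrix.mem_unitaryGroup_iff, hstar]
    exact h1
  · exact Matrix.inv_eq_left_inv h2
end
end

section
/- Let λ_R(p) = √(c²R⁻²|p|² + m²c⁴) and a₊(R⁻¹p) = √((1 + mc²/λ_R(p))/2). Then for all p,q ∈ ℝ³ and R > 0: |a₊(R⁻¹p) − a₊(R⁻¹(p−q))| ≤ √2 |q| / (4mcR). -/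
noncomputable section
open MeasureTheory Filter Set Matrix
open scoped Real ENNReal RealInnerProductSpace FourierTransform

/-!
The estimate is a product of three Lipschitz constants. `λ` is `c`-Lipschitz in `p` and bounded
below by `mc²`; on `[mc², ∞)` the map `t ↦ (1 + mc²/t)/2` is `1/(2mc²)`-Lipschitz and takes values
in `[1/2, 1]`, where `√` is `1/√2`-Lipschitz. Hence `a₊` is Lipschitz with constant
`c · 1/(2mc²) · 1/√2 = √2/(4mc)`, and `R⁻¹p − R⁻¹(p − q) = R⁻¹q`.
-/

lemma abs_sqrt_sub_sqrt_le {a x y : ℝ} (ha : 0 < a) (hx : a ≤ x) (hy : a ≤ y) :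
    |√x - √y| ≤ |x - y| / (2 * √a) := by
  have hsum : 2 * √a ≤ √x + √y := by
    linarith [Real.sqrt_le_sqrt hx, Real.sqrt_le_sqrt hy]
  have hdiff : (√x - √y) * (√x + √y) = x - y := by
    linear_combination Real.sq_sqrt (ha.le.trans hx) - Real.sq_sqrt (ha.le.trans hy)
  rw [le_div_iff₀ (by positivity), ← hdiff, abs_mul, abs_of_nonneg (by positivity : 0 ≤ √x + √y)]
  gcongr

lemma abs_inv_sub_inv_le {k s t : ℝ} (hk : 0 < k) (hs : k ≤ s) (ht : k ≤ t) :
    |s⁻¹ - t⁻¹| ≤ |s - t| / k ^ 2 := by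
  have hs₀ : 0 < s := hk.trans_le hs
  have ht₀ : 0 < t := hk.trans_le ht
  rw [inv_sub_inv hs₀.ne' ht₀.ne', abs_div, abs_of_pos (mul_pos hs₀ ht₀), abs_sub_comm]
  gcongr
  rw [sq]
  exact mul_le_mul hs ht hk.le hs₀.le

lemma abs_sqrt_sq_add_sq_sub_le (x y k : ℝ) :
    |√(x ^ 2 + k ^ 2) - √(y ^ 2 + k ^ 2)| ≤ |x - y| := by
  have hnorm (z : ℝ) : √(z ^ 2 + k ^ 2) = ‖(⟨z, k⟩ : ℂ)‖ := by
    rw [Complex.norm_eq_sqrt_sq_add_sq]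
  have hsub : (⟨x, k⟩ : ℂ) - ⟨y, k⟩ = ((x - y : ℝ) : ℂ) := by
    apply Complex.ext <;> simp
  rw [hnorm, hnorm]
  refine (abs_norm_sub_norm_le _ _).trans ?_
  rw [hsub, Complex.norm_real, Real.norm_eq_abs]

section lam

variable {m c : ℝ}

lemma lam_eq_sqrt (p : R3) : lam m c p = √((c * ‖p‖) ^ 2 + (m * c ^ 2) ^ 2) := by
  rw [lam]
  ring_nf

lemma le_lam (p : R3) : m * c ^ 2 ≤ lam m c p :=
  (le_abs_self _).trans <| lam_eq_sqrt p ▸ Real.abs_le_sqrt (le_add_of_nonneg_left (sq_nonneg _))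

lemma abs_lam_sub_lam_le (hc : 0 ≤ c) (p q : R3) : |lam m c p - lam m c q| ≤ c * ‖p - q‖ :=
  calc |lam m c p - lam m c q| ≤ |c * ‖p‖ - c * ‖q‖| := by
        rw [lam_eq_sqrt, lam_eq_sqrt]
        exact abs_sqrt_sq_add_sq_sub_le _ _ _
    _ = c * |‖p‖ - ‖q‖| := by rw [← mul_sub, abs_mul, abs_of_nonneg hc]
    _ ≤ c * ‖p - q‖ := by gcongr; exact abs_norm_sub_norm_le p q

lemma abs_aplus_sub_aplus_le (hm : 0 < m) (hc : 0 < c) (p q : R3) :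
    |aplus m c p - aplus m c q| ≤ √2 * ‖p - q‖ / (4 * m * c) := by
  set k := m * c ^ 2
  have hk : 0 < k := by positivity
  have half_le (r : R3) : 1 / 2 ≤ (1 + k / lam m c r) / 2 := by
    have : 0 ≤ k / lam m c r := div_nonneg hk.le (hk.le.trans (le_lam r))
    linarith
  have hsqrt_half : 2 * √(1 / 2) = √2 := by
    rw [one_div, Real.sqrt_inv, ← div_eq_mul_inv, Real.div_sqrt]
  calc |aplus m c p - aplus m c q|
      ≤ |(1 + k / lam m c p) / 2 - (1 + k / lam m c q) / 2| / (2 * √(1 / 2)) :=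
        abs_sqrt_sub_sqrt_le (by norm_num) (half_le p) (half_le q)
    _ = k / (2 * √2) * |(lam m c p)⁻¹ - (lam m c q)⁻¹| := by
        rw [hsqrt_half, show (1 + k / lam m c p) / 2 - (1 + k / lam m c q) / 2 =
          k / 2 * ((lam m c p)⁻¹ - (lam m c q)⁻¹) by ring, abs_mul, abs_of_pos (by positivity)]
        ring
    _ ≤ k / (2 * √2) * (c * ‖p - q‖ / k ^ 2) := by
        gcongr
        exact (abs_inv_sub_inv_le hk (le_lam p) (le_lam q)).trans
          (by gcongr; exact abs_lam_sub_lam_le hc.le p q)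
    _ = √2 * ‖p - q‖ / (4 * m * c) := by
        field_simp
        rw [Real.sq_sqrt zero_le_two]
        ring

end lam

/-- `|a₊(R⁻¹p) − a₊(R⁻¹(p−q))| ≤ √2 |q| / (4mcR)`. -/
theorem aplus_difference_estimate (m c R : ℝ) (hm : 0 < m) (hc : 0 < c) (hR : 0 < R)
    (p q : R3) :
    |aplus m c (R⁻¹ • p) - aplus m c (R⁻¹ • (p - q))| ≤
      Real.sqrt 2 * ‖q‖ / (4 * m * c * R) := by
  have hsub : R⁻¹ • p - R⁻¹ • (p - q) = R⁻¹ • q := by rw [← smul_sub, sub_sub_cancel]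
  calc |aplus m c (R⁻¹ • p) - aplus m c (R⁻¹ • (p - q))|
      ≤ √2 * ‖R⁻¹ • q‖ / (4 * m * c) := hsub ▸ abs_aplus_sub_aplus_le hm hc _ _
    _ = √2 * ‖q‖ / (4 * m * c * R) := by
        rw [norm_smul, norm_inv, Real.norm_of_nonneg hR.le]
        field_simp
end
end

section
/- Let λ_R(p) = √(c²R⁻²|p|² + m²c⁴), a₋(R⁻¹p) = √((1 − mc²/λ_R(p))/2). Then for all nonzero p, p−q ∈ ℝ³ and R > 0: |a₋(R⁻¹(p−q))(pᵢ−qᵢ)/|p−q| − a₋(R⁻¹p)pᵢ/|p|| ≤ 3√2 |q|/(2mcR) for each component i = 1,2,3. -/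
noncomputable section
open MeasureTheory Filter Set Matrix
open scoped Real ENNReal RealInnerProductSpace FourierTransform

/-!
With `θ = arctan (|v| / (m c))` one has `cos θ = m c² / λ(v)`, so `a₋(v) = sin (θ / 2)`. As `sin`
and `arctan` are 1-Lipschitz, `a₋` is a `1 / (2 m c)`-Lipschitz function of `|v|` vanishing at `0`.
Writing `x = p - q`, the difference splits as `a₋(x) (x̂ - p̂) + (a₋(x) - a₋(p)) p̂`; the bound
`|x̂ - p̂| ≤ 2 |q| / |x|` on unit vectors is compensated by `a₋(x) ≤ |x| / (2 m c)`, giving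
`3 |q| / (2 m c R)` in total.
-/

open Real

theorem Real.lipschitzWith_arctan : LipschitzWith 1 arctan :=
  lipschitzWith_of_nnnorm_deriv_le differentiable_arctan fun x => by
    rw [deriv_arctan, ← NNReal.coe_le_coe, coe_nnnorm, norm_eq_abs, NNReal.coe_one,
      abs_of_pos (by positivity)]
    exact div_le_one_of_le₀ (by nlinarith [sq_nonneg x]) (by positivity)

theorem abs_sin_half_arctan_sub_le (s t : ℝ) :
    |sin (arctan s / 2) - sin (arctan t / 2)| ≤ |s - t| / 2 :=
  calc _ ≤ |arctan s / 2 - arctan t / 2| := abs_sin_sub_sin_le _ _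
    _ = |arctan s - arctan t| / 2 := by rw [← sub_div, abs_div, abs_two]
    _ ≤ |s - t| / 2 := by
      gcongr ?_ / 2
      simpa [dist_eq] using lipschitzWith_arctan.dist_le_mul s t

section

variable {m c : ℝ} (hm : 0 < m) (hc : 0 < c)
include hm hc

theorem lam_eq_mul_sqrt (v : R3) : lam m c v = m * c ^ 2 * √(1 + (‖v‖ / (m * c)) ^ 2) := by
  rw [lam, ← sqrt_sq (by positivity : 0 ≤ m * c ^ 2), ← sqrt_mul (by positivity)]
  congr 1
  field_simp
  ring

theorem aminus_eq_sin_half_arctan (v : R3) :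
    aminus m c v = sin (arctan (‖v‖ / (m * c)) / 2) := by
  set θ := arctan (‖v‖ / (m * c))
  have hcos : m * c ^ 2 / lam m c v = cos θ := by
    rw [cos_arctan, lam_eq_mul_sqrt hm hc]
    field_simp
  have hθ : 0 ≤ θ := arctan_nonneg.mpr (by positivity)
  have hsin : 0 ≤ sin (θ / 2) :=
    sin_nonneg_of_nonneg_of_le_pi (by linarith)
      (by linarith [arctan_lt_pi_div_two (‖v‖ / (m * c)), pi_pos])
  rw [aminus, hcos, ← sqrt_sq hsin]
  congr 1
  have := cos_sq (θ / 2)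
  rw [mul_div_cancel₀ _ two_ne_zero] at this
  nlinarith [sin_sq_add_cos_sq (θ / 2)]

theorem aminus_zero : aminus m c 0 = 0 := by
  simp [aminus_eq_sin_half_arctan hm hc]

theorem abs_aminus_sub_aminus_le (v w : R3) :
    |aminus m c v - aminus m c w| ≤ ‖v - w‖ / (2 * m * c) := by
  rw [aminus_eq_sin_half_arctan hm hc, aminus_eq_sin_half_arctan hm hc]
  calc _ ≤ |‖v‖ / (m * c) - ‖w‖ / (m * c)| / 2 := abs_sin_half_arctan_sub_le _ _
    _ = |‖v‖ - ‖w‖| / (2 * m * c) := by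
      rw [← sub_div, abs_div, abs_of_pos (by positivity : 0 < m * c)]
      ring
    _ ≤ ‖v - w‖ / (2 * m * c) := by
      gcongr ?_ / _
      exact abs_norm_sub_norm_le v w

theorem abs_aminus_inv_smul_sub_le {R : ℝ} (hR : 0 < R) (v w : R3) :
    |aminus m c (R⁻¹ • v) - aminus m c (R⁻¹ • w)| ≤ (2 * m * c * R)⁻¹ * ‖v - w‖ :=
  calc _ ≤ ‖R⁻¹ • v - R⁻¹ • w‖ / (2 * m * c) := abs_aminus_sub_aminus_le hm hc _ _
    _ = _ := by
      rw [← smul_sub, norm_smul, norm_eq_abs, abs_inv, abs_of_pos hR]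
      field_simp

end

namespace NormedSpace

variable {E : Type*} [NormedAddCommGroup E] [NormedSpace ℝ E]

theorem norm_normalize_le (x : E) : ‖normalize x‖ ≤ 1 := by
  rcases eq_or_ne x 0 with rfl | hx
  · simp [normalize_zero_eq_zero]
  · exact (norm_normalize_eq_one_iff.mpr hx).le

theorem norm_normalize_sub_normalize_le {x : E} (hx : x ≠ 0) (y : E) :
    ‖normalize x - normalize y‖ ≤ 2 * ‖x - y‖ / ‖x‖ := by
  have hx' : 0 < ‖x‖ := norm_pos_iff.mpr hx
  have hsplit : normalize x - normalize y
      = ‖x‖⁻¹ • (x - y) + (‖x‖⁻¹ * (‖y‖ - ‖x‖)) • normalize y := by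
    rw [mul_smul, sub_smul, norm_smul_normalize, smul_sub, smul_sub, inv_smul_smul₀ hx'.ne']
    simp only [normalize]
    abel
  calc _ ≤ ‖x‖⁻¹ * ‖x - y‖ + ‖x‖⁻¹ * |‖y‖ - ‖x‖| * ‖normalize y‖ := by
        rw [hsplit]
        refine (norm_add_le _ _).trans_eq ?_
        rw [norm_smul, norm_smul, norm_eq_abs, norm_eq_abs, abs_mul, abs_inv, abs_of_pos hx']
    _ ≤ ‖x‖⁻¹ * ‖x - y‖ + ‖x‖⁻¹ * ‖x - y‖ * 1 := by
        gcongr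
        · rw [abs_sub_comm]; exact abs_norm_sub_norm_le x y
        · exact norm_normalize_le y
    _ = 2 * ‖x - y‖ / ‖x‖ := by ring

theorem norm_smul_normalize_sub_smul_normalize_le {f : E → ℝ} {K : ℝ}
    (hf : ∀ v w, |f v - f w| ≤ K * ‖v - w‖) (hf0 : f 0 = 0) {x : E} (hx : x ≠ 0) (y : E) :
    ‖f x • normalize x - f y • normalize y‖ ≤ 3 * K * ‖x - y‖ := by
  have hx' : 0 < ‖x‖ := norm_pos_iff.mpr hx
  have hfx : |f x| ≤ K * ‖x‖ := by simpa [hf0] using hf x 0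
  have hK : 0 ≤ K := nonneg_of_mul_nonneg_left ((abs_nonneg _).trans hfx) hx'
  have hsplit : f x • normalize x - f y • normalize y
      = f x • (normalize x - normalize y) + (f x - f y) • normalize y := by
    rw [smul_sub, sub_smul]; abel
  calc _ ≤ |f x| * ‖normalize x - normalize y‖ + |f x - f y| * ‖normalize y‖ := by
        rw [hsplit, ← norm_eq_abs, ← norm_eq_abs, ← norm_smul, ← norm_smul]
        exact norm_add_le _ _
    _ ≤ K * ‖x‖ * (2 * ‖x - y‖ / ‖x‖) + K * ‖x - y‖ * 1 := by
        gcongr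
        · exact norm_normalize_sub_normalize_le hx y
        · exact hf x y
        · exact norm_normalize_le y
    _ = 3 * K * ‖x - y‖ := by
        field_simp
        ring

end NormedSpace

theorem aminus_difference_estimate_general (m c R : ℝ) (hm : 0 < m) (hc : 0 < c) (hR : 0 < R)
    (p q : R3) (hpq : p - q ≠ 0) (i : Fin 3) :
    |aminus m c (R⁻¹ • (p - q)) * ((p - q) i / ‖p - q‖) -
        aminus m c (R⁻¹ • p) * (p i / ‖p‖)| ≤
      3 * Real.sqrt 2 * ‖q‖ / (2 * m * c * R) := by
  have hvec := NormedSpace.norm_smul_normalize_sub_smul_normalize_le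
    (abs_aminus_inv_smul_sub_le hm hc hR) (by simp [aminus_zero hm hc]) hpq p
  rw [sub_sub_cancel_left, norm_neg] at hvec
  calc _ ≤ 3 * (2 * m * c * R)⁻¹ * ‖q‖ := by
        refine le_of_eq_of_le ?_ ((PiLp.norm_apply_le _ i).trans hvec)
        simp [NormedSpace.normalize, div_eq_inv_mul]
    _ ≤ 3 * Real.sqrt 2 * ‖q‖ / (2 * m * c * R) := by
        rw [div_eq_mul_inv, mul_right_comm]
        gcongr
        exact le_mul_of_one_le_right zero_le_three one_lt_sqrt_two.le

/-- `|a₋(R⁻¹(p−q))(pᵢ−qᵢ)/|p−q| − a₋(R⁻¹p)pᵢ/|p|| ≤ 3√2 |q|/(2mcR)`. -/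
theorem aminus_difference_estimate (m c R : ℝ) (hm : 0 < m) (hc : 0 < c) (hR : 0 < R)
    (p q : R3) (hp : p ≠ 0) (hpq : p - q ≠ 0) (i : Fin 3) :
    |aminus m c (R⁻¹ • (p - q)) * ((p - q) i / ‖p - q‖) -
        aminus m c (R⁻¹ • p) * (p i / ‖p‖)| ≤
      3 * Real.sqrt 2 * ‖q‖ / (2 * m * c * R) :=
  aminus_difference_estimate_general m c R hm hc hR p q hpq i
end
end

section
/- For the matrix kernel K_R(p,q) = U(R⁻¹p) − U(R⁻¹(p−q)), where U(p) = a₊(p)I₄ + a₋(p)β(α·p)/|p|, one has the uniform bound sup_{p,q ∈ ℝ³} |K_R(p,q)|/(1+|q|) ≤ C/R for some constant C depending only on m, c. -/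
noncomputable section
open MeasureTheory Filter Set Matrix
open scoped Real ENNReal RealInnerProductSpace FourierTransform

/-!
Write `U(p) = a₊(p) + β (α·g(p))` with `g(p) = a₋(p) p / |p| = c p / √(2λ(λ + mc²))`.
Since `β` and `α·v` are hermitian, `β² = 1` and `(α·v)² = |v|²`, the C*-identity gives
`|β (α·v)| = |v|`, so `|U(x) − U(y)| ≤ |a₊(x) − a₊(y)| + |g(x) − g(y)|`.
Because `λ` is `c`-Lipschitz and bounded below by `mc²`, both `a₊` and `g` are Lipschitz with
constants of order `1/(mc)`. Hence `U` is Lipschitz and `|K_R(p,q)| ≤ L |q| / R`.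
-/

open scoped Matrix.Norms.L2Operator

lemma block4_mul (A B C D A' B' C' D' : Matrix (Fin 2) (Fin 2) ℂ) :
    block4 A B C D * block4 A' B' C' D' =
      block4 (A * A' + B * C') (A * B' + B * D') (C * A' + D * C') (C * B' + D * D') := by
  simp only [block4, reindex_apply, submatrix_mul_equiv, fromBlocks_multiply]

lemma block4_conjTranspose (A B C D : Matrix (Fin 2) (Fin 2) ℂ) :
    (block4 A B C D)ᴴ = block4 Aᴴ Cᴴ Bᴴ Dᴴ := by
  simp only [block4, reindex_apply, conjTranspose_submatrix, fromBlocks_conjTranspose]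

lemma block4_add (A B C D A' B' C' D' : Matrix (Fin 2) (Fin 2) ℂ) :
    block4 A B C D + block4 A' B' C' D' = block4 (A + A') (B + B') (C + C') (D + D') := by
  rw [block4, block4, block4, ← fromBlocks_add]
  rfl

lemma block4_smul (a : ℂ) (A B C D : Matrix (Fin 2) (Fin 2) ℂ) :
    a • block4 A B C D = block4 (a • A) (a • B) (a • C) (a • D) := by
  rw [block4, block4, ← fromBlocks_smul]
  rfl

lemma block4_one : block4 1 0 0 1 = 1 := by
  simp only [block4, reindex_apply, fromBlocks_one, submatrix_one_equiv]

def pauliDot (v : R3) : Matrix (Fin 2) (Fin 2) ℂ := ∑ k, (v k : ℂ) • pauli k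

lemma alphaDot_eq_block4 (v : R3) : alphaDot v = block4 0 (pauliDot v) (pauliDot v) 0 := by
  simp only [alphaDot, pauliDot, diracAlpha, Fin.sum_univ_three, block4_smul, block4_add,
    smul_zero, add_zero]

lemma pauli_conjTranspose (k : Fin 3) : (pauli k)ᴴ = pauli k := by
  fin_cases k <;> ext i j <;> fin_cases i <;> fin_cases j <;> simp [pauli, conjTranspose_apply]

lemma pauliDot_conjTranspose (v : R3) : (pauliDot v)ᴴ = pauliDot v := by
  simp [pauliDot, conjTranspose_sum, conjTranspose_smul, pauli_conjTranspose]

lemma pauliDot_mul_self (v : R3) : pauliDot v * pauliDot v = ((‖v‖ ^ 2 : ℝ) : ℂ) • 1 := by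
  rw [EuclideanSpace.real_norm_sq_eq]
  ext i j
  fin_cases i <;> fin_cases j <;>
    simp [pauliDot, Fin.sum_univ_three, pauli, mul_apply, Fin.sum_univ_two] <;> ring_nf <;>
    simp [Complex.I_sq]

lemma diracBeta_conjTranspose : diracBetaᴴ = diracBeta := by
  simp [diracBeta, block4_conjTranspose]

lemma diracBeta_mul_self : diracBeta * diracBeta = 1 := by
  simp [diracBeta, block4_mul, block4_one]

lemma alphaDot_conjTranspose (v : R3) : (alphaDot v)ᴴ = alphaDot v := by
  rw [alphaDot_eq_block4, block4_conjTranspose, pauliDot_conjTranspose, conjTranspose_zero]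

lemma alphaDot_mul_self (v : R3) : alphaDot v * alphaDot v = ((‖v‖ ^ 2 : ℝ) : ℂ) • 1 := by
  simp only [alphaDot_eq_block4, block4_mul, pauliDot_mul_self, zero_mul, mul_zero, add_zero,
    zero_add, block4_smul, smul_zero, ← block4_one]

lemma alphaDot_smul (t : ℝ) (v : R3) : alphaDot (t • v) = (t : ℂ) • alphaDot v := by
  simp only [alphaDot, Finset.smul_sum, smul_smul, PiLp.smul_apply, smul_eq_mul,
    Complex.ofReal_mul]

lemma alphaDot_sub (v w : R3) : alphaDot (v - w) = alphaDot v - alphaDot w := by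
  simp [alphaDot, sub_smul]

lemma norm_diracBeta_mul_alphaDot (v : R3) : ‖diracBeta * alphaDot v‖ = ‖v‖ := by
  have h : star (diracBeta * alphaDot v) * (diracBeta * alphaDot v) =
      ((‖v‖ ^ 2 : ℝ) : ℂ) • 1 := by
    rw [star_eq_conjTranspose, conjTranspose_mul, alphaDot_conjTranspose, diracBeta_conjTranspose,
      Matrix.mul_assoc, ← Matrix.mul_assoc diracBeta, diracBeta_mul_self, Matrix.one_mul,
      alphaDot_mul_self]
  have := CStarRing.norm_star_mul_self (x := diracBeta * alphaDot v)
  rw [h, norm_smul, norm_one, mul_one, Complex.norm_real,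
    Real.norm_of_nonneg (by positivity)] at this
  nlinarith [norm_nonneg v, norm_nonneg (diracBeta * alphaDot v)]

lemma abs_sub_le_of_abs_sq_sub_le {α : Type*} [Field α] [LinearOrder α] [IsStrictOrderedRing α]
    {x y K : α} (hxy : 0 < x + y) (h : |x ^ 2 - y ^ 2| ≤ K * (x + y)) : |x - y| ≤ K := by
  rw [show x ^ 2 - y ^ 2 = (x - y) * (x + y) by ring, abs_mul, abs_of_pos hxy] at h
  exact le_of_mul_le_mul_right h hxy

lemma lam_sq (m c : ℝ) (p : R3) : lam m c p ^ 2 = c ^ 2 * ‖p‖ ^ 2 + m ^ 2 * c ^ 4 :=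
  Real.sq_sqrt (by positivity)

lemma mul_sq_le_lam (m c : ℝ) (p : R3) : m * c ^ 2 ≤ lam m c p :=
  Real.le_sqrt_of_sq_le (by nlinarith [sq_nonneg (c * ‖p‖)])

lemma mul_norm_le_lam (m c : ℝ) (p : R3) : c * ‖p‖ ≤ lam m c p :=
  Real.le_sqrt_of_sq_le (by nlinarith [sq_nonneg (m * c ^ 2)])

lemma lam_pos {m c : ℝ} (hm : 0 < m) (hc : 0 < c) (p : R3) : 0 < lam m c p :=
  (by positivity : 0 < m * c ^ 2).trans_le (mul_sq_le_lam m c p)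

lemma abs_lam_sub_le {m c : ℝ} (hm : 0 < m) (hc : 0 < c) (a b : R3) :
    |lam m c a - lam m c b| ≤ c * ‖a - b‖ := by
  refine abs_sub_le_of_abs_sq_sub_le (by linarith [lam_pos hm hc a, lam_pos hm hc b]) ?_
  have hnorm : |‖a‖ ^ 2 - ‖b‖ ^ 2| ≤ ‖a - b‖ * (‖a‖ + ‖b‖) := by
    rw [show ‖a‖ ^ 2 - ‖b‖ ^ 2 = (‖a‖ - ‖b‖) * (‖a‖ + ‖b‖) by ring, abs_mul,
      abs_of_nonneg (by positivity : 0 ≤ ‖a‖ + ‖b‖)]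
    gcongr
    exact abs_norm_sub_norm_le a b
  calc |lam m c a ^ 2 - lam m c b ^ 2| = c ^ 2 * |‖a‖ ^ 2 - ‖b‖ ^ 2| := by
        rw [lam_sq, lam_sq, add_sub_add_right_eq_sub, ← mul_sub, abs_mul,
          abs_of_pos (by positivity)]
    _ ≤ c * ‖a - b‖ * (c * ‖a‖ + c * ‖b‖) := by nlinarith [sq_nonneg c]
    _ ≤ c * ‖a - b‖ * (lam m c a + lam m c b) := by
        gcongr <;> exact mul_norm_le_lam m c _

lemma abs_div_lam_sub_le {m c : ℝ} (hm : 0 < m) (hc : 0 < c) (a b : R3) :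
    |m * c ^ 2 / lam m c a - m * c ^ 2 / lam m c b| ≤ ‖a - b‖ / (m * c) := by
  have ha := lam_pos hm hc a
  have hb := lam_pos hm hc b
  have hk : 0 < m * c ^ 2 := by positivity
  rw [div_sub_div _ _ ha.ne' hb.ne', abs_div, abs_of_pos (mul_pos ha hb),
    div_le_div_iff₀ (mul_pos ha hb) (by positivity)]
  calc |m * c ^ 2 * lam m c b - lam m c a * (m * c ^ 2)| * (m * c)
      = m * c ^ 2 * |lam m c a - lam m c b| * (m * c) := by
        rw [show m * c ^ 2 * lam m c b - lam m c a * (m * c ^ 2) =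
          m * c ^ 2 * (lam m c b - lam m c a) by ring, abs_mul, abs_of_pos hk, abs_sub_comm]
    _ ≤ m * c ^ 2 * (c * ‖a - b‖) * (m * c) := by gcongr; exact abs_lam_sub_le hm hc a b
    _ = ‖a - b‖ * (m * c ^ 2 * (m * c ^ 2)) := by ring
    _ ≤ ‖a - b‖ * (lam m c a * lam m c b) := by
        gcongr <;> exact mul_sq_le_lam m c _

lemma div_lam_nonneg {m c : ℝ} (hm : 0 < m) (hc : 0 < c) (p : R3) : 0 ≤ m * c ^ 2 / lam m c p :=
  div_nonneg (by positivity) (lam_pos hm hc p).le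

lemma aplus_sq {m c : ℝ} (hm : 0 < m) (hc : 0 < c) (p : R3) :
    aplus m c p ^ 2 = (1 + m * c ^ 2 / lam m c p) / 2 :=
  Real.sq_sqrt (by linarith [div_lam_nonneg hm hc p])

lemma half_le_aplus {m c : ℝ} (hm : 0 < m) (hc : 0 < c) (p : R3) : 1 / 2 ≤ aplus m c p :=
  Real.le_sqrt_of_sq_le (by linarith [div_lam_nonneg hm hc p])

lemma abs_aplus_sub_le {m c : ℝ} (hm : 0 < m) (hc : 0 < c) (a b : R3) :
    |aplus m c a - aplus m c b| ≤ ‖a - b‖ / (2 * m * c) := by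
  have hsum : 1 ≤ aplus m c a + aplus m c b := by
    linarith [half_le_aplus hm hc a, half_le_aplus hm hc b]
  refine abs_sub_le_of_abs_sq_sub_le (by linarith) ?_
  calc |aplus m c a ^ 2 - aplus m c b ^ 2|
      = |m * c ^ 2 / lam m c a - m * c ^ 2 / lam m c b| / 2 := by
        rw [aplus_sq hm hc, aplus_sq hm hc, ← sub_div, add_sub_add_left_eq_sub, abs_div, abs_two]
    _ ≤ ‖a - b‖ / (m * c) / 2 := by gcongr; exact abs_div_lam_sub_le hm hc a b
    _ ≤ ‖a - b‖ / (2 * m * c) * (aplus m c a + aplus m c b) := by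
        rw [div_div, mul_comm (m * c), ← mul_assoc]
        exact le_mul_of_one_le_right (by positivity) hsum

def aminusDenom (m c : ℝ) (p : R3) : ℝ := √(2 * lam m c p * (lam m c p + m * c ^ 2))

lemma aminusDenom_sq {m c : ℝ} (hm : 0 < m) (hc : 0 < c) (p : R3) :
    aminusDenom m c p ^ 2 = 2 * lam m c p * (lam m c p + m * c ^ 2) :=
  Real.sq_sqrt (by have := lam_pos hm hc p; positivity)

lemma two_mul_sq_le_aminusDenom {m c : ℝ} (hm : 0 < m) (hc : 0 < c) (p : R3) :
    2 * (m * c ^ 2) ≤ aminusDenom m c p := by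
  have := mul_sq_le_lam m c p
  exact Real.le_sqrt_of_sq_le (by nlinarith [mul_pos hm (pow_pos hc 2)])

lemma lam_le_aminusDenom {m c : ℝ} (hm : 0 < m) (hc : 0 < c) (p : R3) :
    lam m c p ≤ aminusDenom m c p := by
  have := mul_sq_le_lam m c p
  exact Real.le_sqrt_of_sq_le (by nlinarith [mul_pos hm (pow_pos hc 2), lam_pos hm hc p])

lemma aminusDenom_pos {m c : ℝ} (hm : 0 < m) (hc : 0 < c) (p : R3) : 0 < aminusDenom m c p :=
  (by positivity : 0 < 2 * (m * c ^ 2)).trans_le (two_mul_sq_le_aminusDenom hm hc p)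

lemma abs_aminusDenom_sub_le {m c : ℝ} (hm : 0 < m) (hc : 0 < c) (a b : R3) :
    |aminusDenom m c a - aminusDenom m c b| ≤ 3 * c * ‖a - b‖ := by
  have hDa := aminusDenom_pos hm hc a
  have hDb := aminusDenom_pos hm hc b
  have hsum : 0 ≤ 2 * (lam m c a + lam m c b) + 2 * (m * c ^ 2) := by
    have := lam_pos hm hc a; have := lam_pos hm hc b; positivity
  refine abs_sub_le_of_abs_sq_sub_le (by linarith) ?_
  calc |aminusDenom m c a ^ 2 - aminusDenom m c b ^ 2|
      = |lam m c a - lam m c b| * (2 * (lam m c a + lam m c b) + 2 * (m * c ^ 2)) := by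
        rw [aminusDenom_sq hm hc, aminusDenom_sq hm hc, ← abs_of_nonneg hsum, ← abs_mul]
        congr 1
        ring
    _ ≤ c * ‖a - b‖ * (3 * (aminusDenom m c a + aminusDenom m c b)) := by
        refine mul_le_mul (abs_lam_sub_le hm hc a b) ?_ hsum (by positivity)
        linarith [lam_le_aminusDenom hm hc a, lam_le_aminusDenom hm hc b,
          two_mul_sq_le_aminusDenom hm hc a, two_mul_sq_le_aminusDenom hm hc b]
    _ = 3 * c * ‖a - b‖ * (aminusDenom m c a + aminusDenom m c b) := by ring

lemma aminus_eq {m c : ℝ} (hm : 0 < m) (hc : 0 < c) (p : R3) :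
    aminus m c p = c * ‖p‖ / aminusDenom m c p := by
  have hl := lam_pos hm hc p
  have hD := aminusDenom_pos hm hc p
  have hk : 0 < lam m c p + m * c ^ 2 := by linarith [mul_pos hm (pow_pos hc 2)]
  have hsq : (1 - m * c ^ 2 / lam m c p) / 2 = (c * ‖p‖ / aminusDenom m c p) ^ 2 := by
    rw [div_pow, aminusDenom_sq hm hc, mul_pow, eq_div_iff (by positivity)]
    field_simp
    linear_combination lam_sq m c p
  rw [aminus, hsq, Real.sqrt_sq (by positivity)]

lemma aminus_div_norm_smul {m c : ℝ} (hm : 0 < m) (hc : 0 < c) (p : R3) :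
    (aminus m c p / ‖p‖) • p = (c / aminusDenom m c p) • p := by
  rcases eq_or_ne p 0 with rfl | hp
  · simp
  · rw [aminus_eq hm hc, mul_div_right_comm, mul_div_cancel_right₀ _ (norm_ne_zero_iff.mpr hp)]

lemma norm_div_aminusDenom_smul_sub_le {m c : ℝ} (hm : 0 < m) (hc : 0 < c) (a b : R3) :
    ‖(c / aminusDenom m c a) • a - (c / aminusDenom m c b) • b‖ ≤ 2 * ‖a - b‖ / (m * c) := by
  set Da := aminusDenom m c a
  set Db := aminusDenom m c b
  have hDa : 0 < Da := aminusDenom_pos hm hc a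
  have hDb : 0 < Db := aminusDenom_pos hm hc b
  have h2k : 2 * (m * c ^ 2) ≤ Da := two_mul_sq_le_aminusDenom hm hc a
  have hb : c * ‖b‖ ≤ Db := (mul_norm_le_lam m c b).trans (lam_le_aminusDenom hm hc b)
  have hscale : c / Da ≤ 1 / (2 * m * c) := by
    rw [div_le_div_iff₀ hDa (by positivity)]
    nlinarith
  have hdiff : |c / Da - c / Db| * ‖b‖ ≤ 3 * ‖a - b‖ / (2 * m * c) :=
    calc |c / Da - c / Db| * ‖b‖ = |Da - Db| * (c * ‖b‖) / (Da * Db) := by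
          rw [div_sub_div _ _ hDa.ne' hDb.ne', abs_div, abs_of_pos (mul_pos hDa hDb),
            show c * Db - Da * c = c * (Db - Da) by ring, abs_mul, abs_of_pos hc, abs_sub_comm]
          ring
      _ ≤ 3 * c * ‖a - b‖ * Db / (Da * Db) := by
          gcongr
          exact abs_aminusDenom_sub_le hm hc a b
      _ = 3 * c * ‖a - b‖ / Da := by field_simp
      _ ≤ 3 * c * ‖a - b‖ / (2 * (m * c ^ 2)) := by gcongr
      _ = 3 * ‖a - b‖ / (2 * m * c) := by field_simp
  calc ‖(c / Da) • a - (c / Db) • b‖ = ‖(c / Da) • (a - b) + (c / Da - c / Db) • b‖ := by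
        rw [smul_sub, sub_smul, sub_add_sub_cancel]
    _ ≤ c / Da * ‖a - b‖ + |c / Da - c / Db| * ‖b‖ := by
        refine (norm_add_le _ _).trans_eq ?_
        rw [norm_smul, norm_smul, Real.norm_of_nonneg (by positivity), Real.norm_eq_abs]
    _ ≤ 1 / (2 * m * c) * ‖a - b‖ + 3 * ‖a - b‖ / (2 * m * c) := by gcongr
    _ = 2 * ‖a - b‖ / (m * c) := by field_simp; ring

lemma Umat_eq {m c : ℝ} (hm : 0 < m) (hc : 0 < c) (p : R3) :
    Umat m c p = (aplus m c p : ℂ) • 1 + diracBeta * alphaDot ((c / aminusDenom m c p) • p) := by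
  rw [Umat, ← aminus_div_norm_smul hm hc, alphaDot_smul, mul_smul_comm]

lemma norm_Umat_sub_le {m c : ℝ} (hm : 0 < m) (hc : 0 < c) (a b : R3) :
    ‖Umat m c a - Umat m c b‖ ≤ 5 * ‖a - b‖ / (2 * m * c) :=
  calc ‖Umat m c a - Umat m c b‖
      ≤ |aplus m c a - aplus m c b| +
          ‖(c / aminusDenom m c a) • a - (c / aminusDenom m c b) • b‖ := by
        rw [Umat_eq hm hc, Umat_eq hm hc, add_sub_add_comm, ← sub_smul, ← mul_sub,
          ← alphaDot_sub]
        refine (norm_add_le _ _).trans_eq ?_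
        rw [norm_smul, norm_one, mul_one, norm_diracBeta_mul_alphaDot, ← Complex.ofReal_sub,
          Complex.norm_real, Real.norm_eq_abs]
    _ ≤ ‖a - b‖ / (2 * m * c) + 2 * ‖a - b‖ / (m * c) :=
        add_le_add (abs_aplus_sub_le hm hc a b) (norm_div_aminusDenom_smul_sub_le hm hc a b)
    _ = 5 * ‖a - b‖ / (2 * m * c) := by field_simp; ring

/-- Uniform bound for the kernel `K_R(p,q) = U(R⁻¹p) − U(R⁻¹(p−q))` in operator norm:
`|K_R(p,q)| ≤ C (1+|q|)/R` with `C = C(m,c)`. -/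
theorem kernel_estimate (m c : ℝ) (hm : 0 < m) (hc : 0 < c) :
    ∃ C : ℝ, 0 < C ∧ ∀ R : ℝ, 0 < R → ∀ p q : R3,
      ‖Matrix.toEuclideanCLM (𝕜 := ℂ) (Umat m c (R⁻¹ • p) - Umat m c (R⁻¹ • (p - q)))‖ ≤
        C * (1 + ‖q‖) / R := by
  refine ⟨5 / (2 * m * c), by positivity, fun R hR p q => ?_⟩
  have hshift : R⁻¹ • p - R⁻¹ • (p - q) = R⁻¹ • q := by rw [← smul_sub, sub_sub_cancel]
  rw [← Matrix.cstar_norm_def]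
  calc ‖Umat m c (R⁻¹ • p) - Umat m c (R⁻¹ • (p - q))‖
      ≤ 5 * ‖R⁻¹ • q‖ / (2 * m * c) := hshift ▸ norm_Umat_sub_le hm hc _ _
    _ = 5 / (2 * m * c) * ‖q‖ / R := by
        rw [norm_smul, norm_inv, Real.norm_of_nonneg hR.le]
        field_simp
    _ ≤ 5 / (2 * m * c) * (1 + ‖q‖) / R := by gcongr; linarith
end
end

section
/- Under (h1) with a scaling assumption (h3)(ii) (ess sup_{|y|>R}V(y)|y|² → −∞), for any fixed ϕ ∈ C_c^∞(ℝ³) with |ϕ|_{L²}=1 and ϕ_η(y) = η^{3/2}ϕ(ηy), one has limsup_{η→0⁺} η⁻² ⟨ϕ, V(η⁻¹·)ϕ⟩_{L²} = −∞. -/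
noncomputable section
open MeasureTheory Filter Set Matrix
open scoped Real ENNReal RealInnerProductSpace FourierTransform

lemma locallyIntegrable_comp_smul_aux {V : R3 → ℝ} (hV : LocallyIntegrable V volume)
    {r : ℝ} (hr : r ≠ 0) : LocallyIntegrable (fun y : R3 => V (r • y)) volume := by
  set e : R3 ≃ₜ R3 := Homeomorph.smul (Units.mk0 r hr)
  have hco : (⇑e : R3 → R3) = fun y : R3 => r • y := by
    funext y
    simp [e, Homeomorph.smul, Units.smul_def]
  have h2 : LocallyIntegrable V (Measure.map (⇑e) volume) := by
    rw [hco, Measure.map_addHaar_smul volume hr]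
    intro x
    obtain ⟨U, hU, hi⟩ := hV x
    refine ⟨U, hU, ?_⟩
    rw [IntegrableOn, Measure.restrict_smul]
    exact hi.smul_measure ENNReal.ofReal_ne_top
  have h3 := (locallyIntegrable_map_homeomorph e).1 h2
  have : (V ∘ ⇑e) = fun y : R3 => V (r • y) := by
    rw [Function.comp_def, hco]
  rwa [this] at h3

set_option maxHeartbeats 1000000 in
/-- Under (h1) and the scaling assumption (h3)(ii), for fixed `ϕ ∈ C_c^∞(ℝ³)` with
`|ϕ|_{L²} = 1` and `ϕ_η(y) = η^{3/2}ϕ(ηy)`, one has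
`limsup_{η→0⁺} η⁻² ⟨ϕ, V(η⁻¹·)ϕ⟩_{L²} = −∞` (equivalently, the quotient tends to `−∞`). -/
theorem rescaled_potential_blowup (V : R3 → ℝ) (hVmeas : Measurable V)
    (hVloc : LocallyIntegrable V volume)
    (R₀ M : ℝ) (h3bdd : ∀ᵐ y : R3, R₀ < ‖y‖ → |V y| ≤ M)
    (h3ii : ∀ K : ℝ, 0 < K → ∃ R : ℝ, 0 < R ∧ ∀ᵐ y : R3, R < ‖y‖ → V y ≤ -K / ‖y‖ ^ 2)
    (ϕ : R3 → ℂ) (hϕ : ContDiff ℝ (⊤ : ℕ∞) ϕ) (hϕc : HasCompactSupport ϕ)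
    (hnorm : (∫ y : R3, ‖ϕ y‖ ^ 2) = 1) :
    Tendsto (fun η : ℝ => η⁻¹ ^ 2 * ∫ y : R3, V (η⁻¹ • y) * ‖ϕ y‖ ^ 2)
      (nhdsWithin 0 (Set.Ioi 0)) atBot := by
  have hfr : Module.finrank ℝ R3 = 3 := finrank_euclideanSpace_fin
  obtain ⟨Cϕ, hCϕ⟩ := hϕc.exists_bound_of_continuous hϕ.continuous
  have hCϕ0 : 0 ≤ Cϕ := le_trans (norm_nonneg _) (hCϕ 0)
  obtain ⟨Rϕ, hRϕpos, hRϕ⟩ := hϕc.isBounded.subset_closedBall_lt 0 0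
  set g : R3 → ℝ := fun y => ‖ϕ y‖ ^ 2 with hgdef
  have hgcont : Continuous g := (hϕ.continuous.norm).pow 2
  have hgc : HasCompactSupport g := hϕc.comp_left (g := fun z : ℂ => ‖z‖ ^ 2) (by simp)
  have hg0 : ∀ y, 0 ≤ g y := fun y => sq_nonneg _
  have hgbound : ∀ y, g y ≤ Cϕ ^ 2 := fun y => by
    have h1 := hCϕ y
    have h2 := norm_nonneg (ϕ y)
    simp only [hgdef]
    nlinarith
  have hgzero : ∀ y : R3, y ∉ Metric.closedBall (0 : R3) Rϕ → g y = 0 := by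
    intro y hy
    have : ϕ y = 0 := image_eq_zero_of_notMem_tsupport (fun hmem => hy (hRϕ hmem))
    simp [hgdef, this]
  -- a point y₀ ≠ 0 where ϕ ≠ 0
  have hex : ∃ y₀ : R3, y₀ ≠ 0 ∧ ϕ y₀ ≠ 0 := by
    by_contra hcon
    push_neg at hcon
    have hae : ∀ᵐ y : R3, g y = 0 := by
      rw [ae_iff]
      refine measure_mono_null ?_ (measure_singleton (0 : R3))
      intro y hy
      simp only [mem_setOf_eq] at hy
      by_contra hy0
      exact hy (by simp [hgdef, hcon y (by simpa using hy0)])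
    have : (∫ y : R3, g y) = 0 := integral_eq_zero_of_ae hae
    rw [hnorm] at this
    norm_num at this
  obtain ⟨y₀, hy₀ne, hϕy₀⟩ := hex
  have hy₀pos : 0 < ‖y₀‖ := norm_pos_iff.2 hy₀ne
  set δ : ℝ := ‖y₀‖ / 2 with hδdef
  have hδpos : 0 < δ := by positivity
  -- the comparison function h(y) = g y / ‖y‖²
  set hfun : R3 → ℝ := fun y => g y / ‖y‖ ^ 2 with hfundef
  have hhmeas : AEStronglyMeasurable hfun volume :=
    (hgcont.measurable.div ((measurable_norm).pow_const 2)).aestronglyMeasurable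
  have hh0 : ∀ y, 0 ≤ hfun y := fun y => div_nonneg (hg0 y) (sq_nonneg _)
  have hhint : ∀ a : ℝ, 0 < a → IntegrableOn hfun {y : R3 | a < ‖y‖} volume := by
    intro a ha
    have hmeasset : MeasurableSet {y : R3 | a < ‖y‖} :=
      (isOpen_lt continuous_const continuous_norm).measurableSet
    have hsub : IntegrableOn hfun ({y : R3 | a < ‖y‖} ∩ Metric.closedBall 0 Rϕ) volume := by
      have hfin : volume ({y : R3 | a < ‖y‖} ∩ Metric.closedBall (0:R3) Rϕ) ≠ ⊤ :=
        (lt_of_le_of_lt (measure_mono inter_subset_right) measure_closedBall_lt_top).ne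
      have hbdd : ∀ᵐ y ∂(volume.restrict ({y : R3 | a < ‖y‖} ∩ Metric.closedBall (0:R3) Rϕ)),
          ‖hfun y‖ ≤ Cϕ ^ 2 / a ^ 2 := by
        filter_upwards [ae_restrict_mem (hmeasset.inter measurableSet_closedBall)] with y hy
        have hya : a < ‖y‖ := hy.1
        have h1 : a ^ 2 ≤ ‖y‖ ^ 2 := by nlinarith
        have : hfun y ≤ Cϕ ^ 2 / a ^ 2 :=
          div_le_div₀ (by positivity) (hgbound y) (by positivity) h1
        rw [Real.norm_eq_abs, abs_of_nonneg (hh0 y)]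
        exact this
      exact Measure.integrableOn_of_bounded hfin hhmeas hbdd
    have hzero : IntegrableOn hfun ({y : R3 | a < ‖y‖} \ Metric.closedBall 0 Rϕ) volume := by
      have hcongr : ∀ y ∈ {y : R3 | a < ‖y‖} \ Metric.closedBall 0 Rϕ,
          hfun y = (0 : ℝ) := by
        intro y hy
        simp [hfundef, hgzero y hy.2]
      exact (integrableOn_congr_fun hcongr (hmeasset.diff measurableSet_closedBall)).2
        (integrableOn_zero)
    have hu := hsub.union hzero
    rwa [inter_union_diff] at hu
  -- positivity of the limiting constant c
  set c : ℝ := ∫ y in {y : R3 | δ < ‖y‖}, hfun y with hcdef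
  clear_value c
  have hcpos : 0 < c := by
    have hnormpos : 0 < ‖ϕ y₀‖ := norm_pos_iff.2 hϕy₀
    have hopen : IsOpen {y : R3 | ‖ϕ y₀‖ / 2 < ‖ϕ y‖} :=
      isOpen_lt continuous_const hϕ.continuous.norm
    obtain ⟨r, hrpos, hball⟩ := Metric.isOpen_iff.1 hopen y₀ (by
      simp only [mem_setOf_eq]; linarith)
    set r' : ℝ := min r δ with hr'def
    have hr'pos : 0 < r' := lt_min hrpos hδpos
    have hr'le : r' ≤ δ := min_le_right _ _
    have hballsub : Metric.ball y₀ r' ⊆ {y : R3 | δ < ‖y‖} := by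
      intro y hy
      have hdist : ‖y - y₀‖ < r' := by
        rwa [Metric.mem_ball, dist_eq_norm] at hy
      have : ‖y₀‖ - ‖y - y₀‖ ≤ ‖y‖ := by
        have := norm_sub_norm_le y₀ y
        rw [norm_sub_rev y₀ y] at this
        linarith
      simp only [mem_setOf_eq]
      have : ‖y₀‖ - r' ≤ ‖y‖ := by linarith
      have hlt : δ < ‖y₀‖ - r' ∨ δ = ‖y₀‖ - r' ∨ True := by tauto
      -- δ = ‖y₀‖/2, r' ≤ δ, so ‖y₀‖ - r' ≥ δ; need strict: ‖y‖ > ‖y₀‖ - r' strictly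
      have hstrict : ‖y₀‖ - r' < ‖y‖ := by linarith
      linarith [hr'le, hstrict]
    set m : ℝ := (‖ϕ y₀‖ / 2) ^ 2 / (3 * δ) ^ 2 with hmdef
    have hmpos : 0 < m := by positivity
    have hlow : ∀ y ∈ Metric.ball y₀ r', m ≤ hfun y := by
      intro y hy
      have hmem := hball (Metric.ball_subset_ball (min_le_left r δ) hy)
      simp only [mem_setOf_eq] at hmem
      have hg_lb : (‖ϕ y₀‖ / 2) ^ 2 ≤ g y := by
        simp only [hgdef]
        nlinarith [norm_nonneg (ϕ y)]
      have hy_ub : ‖y‖ ≤ 3 * δ := by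
        have hdist : ‖y - y₀‖ < r' := by rwa [Metric.mem_ball, dist_eq_norm] at hy
        have := norm_le_insert' y y₀
        calc ‖y‖ ≤ ‖y₀‖ + ‖y - y₀‖ := by
              have h := norm_add_le y₀ (y - y₀); simpa using h
          _ ≤ 2 * δ + δ := by
              have : ‖y₀‖ = 2 * δ := by rw [hδdef]; ring
              linarith
          _ = 3 * δ := by ring
      have hy_pos : 0 < ‖y‖ := lt_trans hδpos (hballsub hy)
      have h2 : ‖y‖ ^ 2 ≤ (3 * δ) ^ 2 := by nlinarith
      exact div_le_div₀ (hg0 y) hg_lb (by positivity) h2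
    have h1 : m * (volume (Metric.ball y₀ r')).toReal ≤ ∫ y in Metric.ball y₀ r', hfun y :=
      setIntegral_ge_of_const_le_real measurableSet_ball measure_ball_lt_top.ne hlow
        ((hhint δ hδpos).mono_set hballsub)
    have h2 : (∫ y in Metric.ball y₀ r', hfun y) ≤ c := by
      rw [hcdef]
      apply setIntegral_mono_set (hhint δ hδpos)
      · filter_upwards [ae_restrict_mem (isOpen_lt continuous_const
          continuous_norm).measurableSet] with y _
        exact hh0 y
      · exact HasSubset.Subset.eventuallyLE hballsub
    have hvolpos : 0 < (volume (Metric.ball y₀ r')).toReal :=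
      ENNReal.toReal_pos (Metric.measure_ball_pos volume y₀ hr'pos).ne' measure_ball_lt_top.ne
    nlinarith
  -- the L¹ mass of V near the origin
  set S : ℝ := ∫ x in Metric.closedBall (0 : R3) R₀, |V x| with hSdef
  clear_value S
  have hVR0int : IntegrableOn (fun x => |V x|) (Metric.closedBall (0 : R3) R₀) volume :=
    (hVloc.integrableOn_isCompact (isCompact_closedBall _ _)).abs
  have hS0 : 0 ≤ S := by
    rw [hSdef]
    exact setIntegral_nonneg measurableSet_closedBall (fun x _ => abs_nonneg _)
  set W1 : ℝ := (volume (Metric.ball (0 : R3) 1)).toReal with hW1def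
  clear_value W1
  have hW10 : 0 ≤ W1 := by rw [hW1def]; exact ENNReal.toReal_nonneg
  set M' : ℝ := max M 0 with hM'def
  have hM'0 : 0 ≤ M' := le_max_right _ _
  rw [tendsto_atBot]
  intro b
  -- choose K
  set K : ℝ := max ((2 - b) / c) (1 / c) with hKdef
  have hKpos : 0 < K := lt_of_lt_of_le (by positivity) (le_max_right _ _)
  have hKb : -(K * c) + 1 ≤ b := by
    have h1 : (2 - b) / c ≤ K := le_max_left _ _
    have h2 : 2 - b ≤ K * c := by
      rw [div_le_iff₀ hcpos] at h1; linarith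
    linarith
  obtain ⟨R, hRpos, hVR⟩ := h3ii K hKpos
  set R' : ℝ := max R R₀ with hR'def
  have hR'pos : 0 < R' := lt_of_lt_of_le hRpos (le_max_left _ _)
  have hR₀R' : R₀ ≤ R' := le_max_right _ _
  have hVR' : ∀ᵐ x : R3, R' < ‖x‖ → V x ≤ -K / ‖x‖ ^ 2 :=
    hVR.mono fun x hx h => hx (lt_of_le_of_lt (le_max_left _ _) h)
  set C' : ℝ := Cϕ ^ 2 * S + M' * Cϕ ^ 2 * (R' ^ 3 * W1) + 1 with hC'def
  have hC'pos : 0 < C' := by positivity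
  have hev : ∀ᶠ η in nhdsWithin (0 : ℝ) (Set.Ioi 0),
      η ∈ Set.Ioo (0 : ℝ) (min (δ / R') (1 / C')) := by
    apply Ioo_mem_nhdsGT_of_mem
    constructor
    · exact le_refl 0
    · exact lt_min (by positivity) (by positivity)
  filter_upwards [hev] with η hη
  obtain ⟨hηpos, hηlt⟩ := hη
  have hηR' : η * R' ≤ δ := by
    have h := lt_of_lt_of_le hηlt (min_le_left _ _)
    rw [lt_div_iff₀ hR'pos] at h; linarith
  have hηC' : η * C' ≤ 1 := by
    have h := lt_of_lt_of_le hηlt (min_le_right _ _)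
    rw [lt_div_iff₀ hC'pos] at h; linarith
  have hηne : η ≠ 0 := hηpos.ne'
  have hηinv_ne : η⁻¹ ≠ (0 : ℝ) := inv_ne_zero hηne
  have qmp : Measure.QuasiMeasurePreserving (fun y : R3 => η⁻¹ • y) volume volume :=
    Measure.quasiMeasurePreserving_smul volume hηinv_ne
  have hnorm_smul : ∀ y : R3, ‖η⁻¹ • y‖ = ‖y‖ / η := by
    intro y
    rw [norm_smul, Real.norm_eq_abs, abs_of_pos (inv_pos.2 hηpos), inv_mul_eq_div]
  -- a.e. bounds for the rescaled potential
  have hae1 : ∀ᵐ y : R3, η * R₀ < ‖y‖ → |V (η⁻¹ • y)| ≤ M := by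
    filter_upwards [qmp.ae h3bdd] with y hy hlt
    apply hy
    rw [hnorm_smul, lt_div_iff₀ hηpos]
    linarith [hlt]
  have hae2 : ∀ᵐ y : R3, η * R' < ‖y‖ →
      V (η⁻¹ • y) * g y ≤ -(K * η ^ 2) * (g y / ‖y‖ ^ 2) := by
    filter_upwards [qmp.ae hVR'] with y hy hlt
    have hynorm : 0 < ‖y‖ := lt_trans (by positivity) hlt
    have h1 : R' < ‖η⁻¹ • y‖ := by
      rw [hnorm_smul, lt_div_iff₀ hηpos]; linarith
    have h2 := hy h1
    have h3 : V (η⁻¹ • y) ≤ -(K * η ^ 2) / ‖y‖ ^ 2 := by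
      rw [hnorm_smul, div_pow] at h2
      calc V (η⁻¹ • y) ≤ -K / (‖y‖ ^ 2 / η ^ 2) := h2
        _ = -(K * η ^ 2) / ‖y‖ ^ 2 := by
            field_simp
    calc V (η⁻¹ • y) * g y ≤ (-(K * η ^ 2) / ‖y‖ ^ 2) * g y :=
          mul_le_mul_of_nonneg_right h3 (hg0 y)
      _ = -(K * η ^ 2) * (g y / ‖y‖ ^ 2) := by ring
  -- integrability of the full integrand
  have hVη : LocallyIntegrable (fun y : R3 => V (η⁻¹ • y)) volume :=
    locallyIntegrable_comp_smul_aux hVloc hηinv_ne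
  have hFi : Integrable (fun y : R3 => V (η⁻¹ • y) * g y) volume := by
    have := hVη.integrable_smul_right_of_hasCompactSupport hgcont hgc
    simpa [smul_eq_mul] using this
  -- the three regions
  set B : Set R3 := Metric.closedBall 0 (η * R') with hBdef
  set B₀ : Set R3 := Metric.closedBall 0 (η * R₀) with hB₀def
  have hB₀B : B₀ ⊆ B :=
    Metric.closedBall_subset_closedBall (by nlinarith)
  have hBc : Bᶜ = {y : R3 | η * R' < ‖y‖} := by
    ext y
    simp [hBdef, Metric.mem_closedBall, dist_zero_right, not_le]
  -- change of variables on the inner ball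
  set u : R3 → ℝ := (Metric.closedBall (0 : R3) R₀).indicator (fun x => |V x|) with hudef
  have huint : Integrable u volume := by
    rw [hudef, integrable_indicator_iff measurableSet_closedBall]
    exact hVR0int
  have hindic : ∀ y : R3, u (η⁻¹ • y) = B₀.indicator (fun y => |V (η⁻¹ • y)|) y := by
    intro y
    have hiff : η⁻¹ • y ∈ Metric.closedBall (0 : R3) R₀ ↔ y ∈ B₀ := by
      simp only [Metric.mem_closedBall, dist_zero_right, hB₀def]
      rw [hnorm_smul, div_le_iff₀ hηpos]
      constructor <;> intro h <;> linarith
    by_cases hy : y ∈ B₀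
    · rw [hudef, indicator_of_mem (hiff.2 hy), indicator_of_mem hy]
    · rw [hudef, indicator_of_notMem (fun hm => hy (hiff.1 hm)), indicator_of_notMem hy]
  have hVB₀int : IntegrableOn (fun y : R3 => |V (η⁻¹ • y)|) B₀ volume := by
    have heq : B₀.indicator (fun y : R3 => |V (η⁻¹ • y)|) = fun y : R3 => u (η⁻¹ • y) := by
      funext y; rw [hindic y]
    rw [← integrable_indicator_iff (measurableSet_closedBall : MeasurableSet B₀), heq]
    exact huint.comp_smul hηinv_ne
  have hchange : (∫ y in B₀, |V (η⁻¹ • y)|) = η ^ 3 * S := by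
    have h1 : (∫ y in B₀, |V (η⁻¹ • y)|) = ∫ y : R3, u (η⁻¹ • y) := by
      rw [← integral_indicator (by exact measurableSet_closedBall)]
      congr 1
      funext y
      rw [hindic y]
    rw [h1, Measure.integral_comp_inv_smul_of_nonneg volume u hηpos.le]
    rw [hfr, smul_eq_mul]
    congr 1
    rw [hudef, integral_indicator measurableSet_closedBall, hSdef]
  -- estimate on the inner ball
  have est1 : (∫ y in B₀, V (η⁻¹ • y) * g y) ≤ Cϕ ^ 2 * (η ^ 3 * S) := by
    have hmono : (∫ y in B₀, V (η⁻¹ • y) * g y) ≤ ∫ y in B₀, Cϕ ^ 2 * |V (η⁻¹ • y)| := by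
      apply setIntegral_mono (hFi.integrableOn) (hVB₀int.const_mul _)
      intro y
      calc V (η⁻¹ • y) * g y ≤ |V (η⁻¹ • y)| * g y :=
            mul_le_mul_of_nonneg_right (le_abs_self _) (hg0 y)
        _ ≤ |V (η⁻¹ • y)| * Cϕ ^ 2 := by
            exact mul_le_mul_of_nonneg_left (hgbound y) (abs_nonneg _)
        _ = Cϕ ^ 2 * |V (η⁻¹ • y)| := by ring
    rw [integral_const_mul, hchange] at hmono
    exact hmono
  -- estimate on the annulus
  have hvolB : (volume B).toReal = (η * R') ^ 3 * W1 := by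
    rw [hBdef, Measure.addHaar_closedBall volume 0 (by positivity : (0:ℝ) ≤ η * R'), hfr]
    rw [ENNReal.toReal_mul, ENNReal.toReal_ofReal (by positivity), hW1def]
  have est2 : (∫ y in B \ B₀, V (η⁻¹ • y) * g y) ≤ M' * Cϕ ^ 2 * ((η * R') ^ 3 * W1) := by
    have hmeasBB₀ : MeasurableSet (B \ B₀) :=
      measurableSet_closedBall.diff measurableSet_closedBall
    have hmono : (∫ y in B \ B₀, V (η⁻¹ • y) * g y) ≤ ∫ _ in B \ B₀, M' * Cϕ ^ 2 := by
      apply setIntegral_mono_on_ae (hFi.integrableOn)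
        (integrableOn_const (lt_of_le_of_lt (measure_mono diff_subset)
          measure_closedBall_lt_top).ne)
        hmeasBB₀
      filter_upwards [hae1] with y hy hmem
      have hnotB₀ : η * R₀ < ‖y‖ := by
        have := hmem.2
        simp only [hB₀def, Metric.mem_closedBall, dist_zero_right, not_le] at this
        exact this
      have h1 : |V (η⁻¹ • y)| ≤ M := hy hnotB₀
      have h2 : |V (η⁻¹ • y)| ≤ M' := le_trans h1 (le_max_left _ _)
      calc V (η⁻¹ • y) * g y ≤ |V (η⁻¹ • y)| * g y :=
            mul_le_mul_of_nonneg_right (le_abs_self _) (hg0 y)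
        _ ≤ M' * Cϕ ^ 2 := mul_le_mul h2 (hgbound y) (hg0 y) hM'0
    have hconst : (∫ _ in B \ B₀, M' * Cϕ ^ 2) ≤ M' * Cϕ ^ 2 * ((η * R') ^ 3 * W1) := by
      rw [setIntegral_const, smul_eq_mul]
      rw [← hvolB]
      have hle : (volume (B \ B₀)).toReal ≤ (volume B).toReal := by
        apply ENNReal.toReal_mono measure_closedBall_lt_top.ne
        exact measure_mono diff_subset
      calc (volume (B \ B₀)).toReal * (M' * Cϕ ^ 2)
          ≤ (volume B).toReal * (M' * Cϕ ^ 2) :=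
            mul_le_mul_of_nonneg_right hle (by positivity)
        _ = M' * Cϕ ^ 2 * (volume B).toReal := by ring
    linarith
  -- estimate on the exterior
  have hhBcint : IntegrableOn hfun Bᶜ volume := by
    rw [hBc]; exact hhint (η * R') (by positivity)
  have est3 : (∫ y in Bᶜ, V (η⁻¹ • y) * g y) ≤ -(K * η ^ 2) * c := by
    have hmono : (∫ y in Bᶜ, V (η⁻¹ • y) * g y)
        ≤ ∫ y in Bᶜ, -(K * η ^ 2) * hfun y := by
      apply setIntegral_mono_on_ae (hFi.integrableOn) (hhBcint.const_mul _)
        (measurableSet_closedBall.compl)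
      filter_upwards [hae2] with y hy hmem
      have hlt : η * R' < ‖y‖ := by rwa [hBc] at hmem
      exact hy hlt
    have hcc : c ≤ ∫ y in Bᶜ, hfun y := by
      rw [hcdef]
      apply setIntegral_mono_set hhBcint
      · filter_upwards [ae_restrict_mem measurableSet_closedBall.compl] with y _
        exact hh0 y
      · apply HasSubset.Subset.eventuallyLE
        rw [hBc]
        intro y hy
        simp only [mem_setOf_eq] at hy ⊢
        linarith
    rw [integral_const_mul] at hmono
    have : -(K * η ^ 2) * (∫ y in Bᶜ, hfun y) ≤ -(K * η ^ 2) * c := by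
      apply mul_le_mul_of_nonpos_left hcc
      nlinarith
    linarith
  -- put the pieces together
  have hsplit : (∫ y : R3, V (η⁻¹ • y) * g y)
      = (∫ y in B₀, V (η⁻¹ • y) * g y) + (∫ y in B \ B₀, V (η⁻¹ • y) * g y)
        + (∫ y in Bᶜ, V (η⁻¹ • y) * g y) := by
    have h1 : (∫ y in B, V (η⁻¹ • y) * g y) + (∫ y in Bᶜ, V (η⁻¹ • y) * g y)
        = ∫ y : R3, V (η⁻¹ • y) * g y :=
      integral_add_compl measurableSet_closedBall hFi
    have h2 : (∫ y in B ∩ B₀, V (η⁻¹ • y) * g y) + (∫ y in B \ B₀, V (η⁻¹ • y) * g y)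
        = ∫ y in B, V (η⁻¹ • y) * g y :=
      integral_inter_add_diff measurableSet_closedBall hFi.integrableOn
    rw [inter_eq_self_of_subset_right hB₀B] at h2
    linarith
  have htotal : (∫ y : R3, V (η⁻¹ • y) * g y)
      ≤ Cϕ ^ 2 * (η ^ 3 * S) + M' * Cϕ ^ 2 * ((η * R') ^ 3 * W1) + -(K * η ^ 2) * c := by
    rw [hsplit]; linarith
  -- final algebra
  have hkey : η⁻¹ ^ 2 * (∫ y : R3, V (η⁻¹ • y) * g y)
      ≤ η⁻¹ ^ 2 * (Cϕ ^ 2 * (η ^ 3 * S) + M' * Cϕ ^ 2 * ((η * R') ^ 3 * W1)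
        + -(K * η ^ 2) * c) :=
    mul_le_mul_of_nonneg_left htotal (by positivity)
  have halg : η⁻¹ ^ 2 * (Cϕ ^ 2 * (η ^ 3 * S) + M' * Cϕ ^ 2 * ((η * R') ^ 3 * W1)
      + -(K * η ^ 2) * c) = η * (C' - 1) - K * c := by
    rw [hC'def]
    field_simp
    ring
  have hfinal : η * (C' - 1) - K * c ≤ b := by
    have h1 : η * (C' - 1) ≤ 1 := by nlinarith
    linarith
  calc η⁻¹ ^ 2 * (∫ y : R3, V (η⁻¹ • y) * g y)
      ≤ η * (C' - 1) - K * c := by rw [← halg]; exact hkey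
    _ ≤ b := hfinal
end
end
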